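/- arXiv:1505.01265 — 3 statements merged into one kernel-verified Lean document; each statement's English description precedes it below -/
import Mathlib

section
/- For any two finite simple graphs G and H, the independence number of their disjunctive product equals the product of their independence numbers: α(G ∗ H) = α(G) · α(H). -/
open Finset

namespace SimpleGraph

variable {V W : Type*}

/-- The strong graph product. -/
def strongProd (G : SimpleGraph V) (H : SimpleGraph W) : SimpleGraph (V × W) where
  Adj x y := x ≠ y ∧ (x.1 = y.1 ∨ G.Adj x.1 y.1) ∧ (x.2 = y.2 ∨ H.Adj x.2 y.2)
  symm := by
    constructor
    rintro x y ⟨hne, h1, h2⟩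
    exact ⟨hne.symm, h1.imp Eq.symm (fun h => G.adj_symm h), h2.imp Eq.symm (fun h => H.adj_symm h)⟩
  loopless := by constructor; rintro x ⟨hne, -, -⟩; exact hne rfl

/-- The disjunctive graph product. -/
def disjProd (G : SimpleGraph V) (H : SimpleGraph W) : SimpleGraph (V × W) where
  Adj x y := G.Adj x.1 y.1 ∨ H.Adj x.2 y.2
  symm := ⟨fun _ _ h => h.imp (fun h => G.adj_symm h) (fun h => H.adj_symm h)⟩
  loopless := ⟨fun x h => h.elim (fun h => G.irrefl h) (fun h => H.irrefl h)⟩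

/-- A finite set of vertices is independent if no two of its members are adjacent. -/
def IsIndep (G : SimpleGraph V) (s : Finset V) : Prop :=
  ∀ ⦃v⦄, v ∈ s → ∀ ⦃w⦄, w ∈ s → ¬ G.Adj v w

/-- The independence number. -/
noncomputable def alpha (G : SimpleGraph V) [Fintype V] : ℕ :=
  sSup {n | ∃ s : Finset V, G.IsIndep s ∧ s.card = n}

/-- The fractional packing number. -/
noncomputable def alphaStar (G : SimpleGraph V) [Fintype V] : ℝ :=
  sSup {x | ∃ t : V → ℝ, (∀ v, 0 ≤ t v) ∧
    (∀ C : Finset V, G.IsClique (C : Set V) → ∑ v ∈ C, t v ≤ 1) ∧ x = ∑ v, t v}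

/-- The Lovász number. -/
noncomputable def lovTheta (G : SimpleGraph V) [Fintype V] : ℝ :=
  sSup {x | ∃ B : Matrix V V ℝ, B.PosSemidef ∧ B.trace = 1 ∧
    (∀ v w, G.Adj v w → B v w = 0) ∧ x = ∑ v, ∑ w, B v w}

/-- Schrijver's variant of the Lovász number. -/
noncomputable def thetaMinus (G : SimpleGraph V) [Fintype V] : ℝ :=
  sSup {x | ∃ B : Matrix V V ℝ, B.PosSemidef ∧ B.trace = 1 ∧ (∀ v w, 0 ≤ B v w) ∧
    (∀ v w, G.Adj v w → B v w = 0) ∧ x = ∑ v, ∑ w, B v w}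

/-- Szegedy's variant of the Lovász number. -/
noncomputable def thetaPlus (G : SimpleGraph V) [Fintype V] : ℝ :=
  sSup {x | ∃ B : Matrix V V ℝ, B.PosSemidef ∧ B.trace = 1 ∧
    (∀ v w, G.Adj v w → B v w ≤ 0) ∧ x = ∑ v, ∑ w, B v w}

/-- The clique covering number. -/
noncomputable def cliqueCoverNum (G : SimpleGraph V) [Fintype V] : ℕ :=
  sInf {n | ∃ C : Fin n → Finset V, (∀ i, G.IsClique (C i : Set V)) ∧ ∀ v, ∃ i, v ∈ C i}

/-- The blow-up of a graph along integer vertex weights. -/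
def blup (G : SimpleGraph V) (p : V → ℕ) : SimpleGraph (Σ v, Fin (p v)) where
  Adj x y := G.Adj x.1 y.1
  symm := ⟨fun _ _ h => G.adj_symm h⟩
  loopless := ⟨fun x h => G.irrefl h⟩

/-- The weighted independence number (integer weights). -/
noncomputable def alphaWNat (G : SimpleGraph V) [Fintype V] (p : V → ℕ) : ℕ :=
  sSup {n | ∃ s : Finset V, G.IsIndep s ∧ n = ∑ v ∈ s, p v}

/-- The weighted independence number (real weights). -/
noncomputable def alphaW (G : SimpleGraph V) [Fintype V] (p : V → ℝ) : ℝ :=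
  sSup {x | ∃ s : Finset V, G.IsIndep s ∧ x = ∑ v ∈ s, p v}

end SimpleGraph

open SimpleGraph
open scoped RealInnerProductSpace

/-!
An independent set of `G.disjProd H` projects onto independent sets of `G` and of `H` and lies
in the product of its two projections, so its size is at most `α(G) α(H)`. Conversely the
product of independent sets of `G` and `H` is independent in `G.disjProd H`.
-/

namespace SimpleGraph

variable {V W : Type*}

theorem isIndep_empty (G : SimpleGraph V) : G.IsIndep ∅ := by
  simp [IsIndep]

theorem IsIndep.image_fst [DecidableEq V] {G : SimpleGraph V} {H : SimpleGraph W}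
    {s : Finset (V × W)} (hs : (G.disjProd H).IsIndep s) : G.IsIndep (s.image Prod.fst) := by
  simp only [IsIndep, mem_image, forall_exists_index, and_imp]
  rintro _ x hx rfl _ y hy rfl hxy
  exact hs hx hy (Or.inl hxy)

theorem IsIndep.image_snd [DecidableEq W] {G : SimpleGraph V} {H : SimpleGraph W}
    {s : Finset (V × W)} (hs : (G.disjProd H).IsIndep s) : H.IsIndep (s.image Prod.snd) := by
  simp only [IsIndep, mem_image, forall_exists_index, and_imp]
  rintro _ x hx rfl _ y hy rfl hxy
  exact hs hx hy (Or.inr hxy)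

theorem IsIndep.product {G : SimpleGraph V} {H : SimpleGraph W} {s : Finset V} {t : Finset W}
    (hs : G.IsIndep s) (ht : H.IsIndep t) : (G.disjProd H).IsIndep (s ×ˢ t) := by
  rintro x hx y hy (hxy | hxy)
  · exact hs (mem_product.1 hx).1 (mem_product.1 hy).1 hxy
  · exact ht (mem_product.1 hx).2 (mem_product.1 hy).2 hxy

section alpha

variable [Fintype V] {G : SimpleGraph V}

theorem bddAbove_card_isIndep (G : SimpleGraph V) :
    BddAbove {n | ∃ s : Finset V, G.IsIndep s ∧ s.card = n} :=
  ⟨Fintype.card V, by rintro _ ⟨s, -, rfl⟩; exact s.card_le_univ⟩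

theorem IsIndep.card_le_alpha {s : Finset V} (hs : G.IsIndep s) : s.card ≤ G.alpha :=
  le_csSup (bddAbove_card_isIndep G) ⟨s, hs, rfl⟩

theorem alpha_le_of_forall_isIndep {k : ℕ} (h : ∀ s : Finset V, G.IsIndep s → s.card ≤ k) :
    G.alpha ≤ k :=
  csSup_le ⟨0, ∅, G.isIndep_empty, rfl⟩ (by rintro _ ⟨s, hs, rfl⟩; exact h s hs)

theorem exists_isIndep_card_eq_alpha (G : SimpleGraph V) :
    ∃ s : Finset V, G.IsIndep s ∧ s.card = G.alpha :=
  Nat.sSup_mem (s := {n | ∃ s : Finset V, G.IsIndep s ∧ s.card = n}) ⟨0, ∅, G.isIndep_empty, rfl⟩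
    (bddAbove_card_isIndep G)

end alpha

variable [Fintype V] [Fintype W] {G : SimpleGraph V} {H : SimpleGraph W}

theorem IsIndep.card_le_alpha_mul_alpha {s : Finset (V × W)} (hs : (G.disjProd H).IsIndep s) :
    s.card ≤ G.alpha * H.alpha := by
  classical
  calc s.card ≤ (s.image Prod.fst ×ˢ s.image Prod.snd).card := card_le_card subset_product
    _ = (s.image Prod.fst).card * (s.image Prod.snd).card := card_product _ _
    _ ≤ G.alpha * H.alpha :=
      Nat.mul_le_mul hs.image_fst.card_le_alpha hs.image_snd.card_le_alpha

theorem alpha_mul_alpha_le_alpha_disjProd : G.alpha * H.alpha ≤ (G.disjProd H).alpha := by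
  obtain ⟨s, hs, hs_card⟩ := G.exists_isIndep_card_eq_alpha
  obtain ⟨t, ht, ht_card⟩ := H.exists_isIndep_card_eq_alpha
  rw [← hs_card, ← ht_card, ← card_product]
  exact (hs.product ht).card_le_alpha

end SimpleGraph

theorem alpha_disjProd {V W : Type*} [Fintype V] [Fintype W]
    (G : SimpleGraph V) (H : SimpleGraph W) :
    (G.disjProd H).alpha = G.alpha * H.alpha :=
  le_antisymm (alpha_le_of_forall_isIndep fun _ hs => hs.card_le_alpha_mul_alpha)
    alpha_mul_alpha_le_alpha_disjProd
end

section
/- The fractional packing number is multiplicative under the strong graph product: α*(G ⊠ H) = α*(G) · α*(H) for all finite simple graphs G and H. -/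
open Finset

open SimpleGraph
open scoped RealInnerProductSpace

/-!
Products of fractional packings of `G` and `H` are fractional packings of `G ⊠ H`, which gives
`≥`. For `≤`, take an optimal fractional packing `t` of `G ⊠ H` (the feasible polytope is compact,
so the supremum is attained). For a clique `C` of `G` and a clique `D` of `H`, `C × D` is a clique
of `G ⊠ H`, so `w ↦ ∑ v ∈ C, t (v, w)` is a fractional packing of `H`. Hence the row sums
`v ↦ ∑ w, t (v, w)` have total at most `α*(H)` on every clique of `G`, and after dividing by
`α*(H)` they form a fractional packing of `G`.
-/

namespace SimpleGraph

variable {V W : Type*} {G : SimpleGraph V} {H : SimpleGraph W}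

def IsFractionalPacking (G : SimpleGraph V) (t : V → ℝ) : Prop :=
  (∀ v, 0 ≤ t v) ∧ ∀ C : Finset V, G.IsClique (C : Set V) → ∑ v ∈ C, t v ≤ 1

theorem IsClique.strongProd {s : Set V} {t : Set W} (hs : G.IsClique s) (ht : H.IsClique t) :
    (G.strongProd H).IsClique (s ×ˢ t) := by
  rintro p ⟨hp₁, hp₂⟩ q ⟨hq₁, hq₂⟩ hpq
  exact ⟨hpq, (eq_or_ne p.1 q.1).imp_right (hs hp₁ hq₁),
    (eq_or_ne p.2 q.2).imp_right (ht hp₂ hq₂)⟩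

theorem IsClique.image_fst_of_strongProd {s : Set (V × W)} (hs : (G.strongProd H).IsClique s) :
    G.IsClique (Prod.fst '' s) := by
  rintro _ ⟨p, hp, rfl⟩ _ ⟨q, hq, rfl⟩ hne
  exact (hs hp hq (ne_of_apply_ne _ hne)).2.1.resolve_left hne

theorem IsClique.image_snd_of_strongProd {s : Set (V × W)} (hs : (G.strongProd H).IsClique s) :
    H.IsClique (Prod.snd '' s) := by
  rintro _ ⟨p, hp, rfl⟩ _ ⟨q, hq, rfl⟩ hne
  exact (hs hp hq (ne_of_apply_ne _ hne)).2.2.resolve_left hne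

namespace IsFractionalPacking

theorem le_one {t : V → ℝ} (ht : G.IsFractionalPacking t) (v : V) : t v ≤ 1 := by
  simpa using ht.2 {v} (by simp)

/-- A clique of `G ⊠ H` lies in the product of its two projections, which are cliques. -/
theorem mul {t : V → ℝ} {s : W → ℝ} (ht : G.IsFractionalPacking t)
    (hs : H.IsFractionalPacking s) :
    (G.strongProd H).IsFractionalPacking fun p => t p.1 * s p.2 := by
  classical
  refine ⟨fun p => mul_nonneg (ht.1 _) (hs.1 _), fun C hC => ?_⟩
  have hfst : G.IsClique ((C.image Prod.fst : Finset V) : Set V) := by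
    rw [Finset.coe_image]; exact hC.image_fst_of_strongProd
  have hsnd : H.IsClique ((C.image Prod.snd : Finset W) : Set W) := by
    rw [Finset.coe_image]; exact hC.image_snd_of_strongProd
  have hsub : C ⊆ C.image Prod.fst ×ˢ C.image Prod.snd := fun p hp =>
    mem_product.2 ⟨mem_image_of_mem _ hp, mem_image_of_mem _ hp⟩
  calc ∑ p ∈ C, t p.1 * s p.2
      ≤ ∑ p ∈ C.image Prod.fst ×ˢ C.image Prod.snd, t p.1 * s p.2 :=
        sum_le_sum_of_subset_of_nonneg hsub fun p _ _ => mul_nonneg (ht.1 _) (hs.1 _)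
    _ = (∑ v ∈ C.image Prod.fst, t v) * ∑ w ∈ C.image Prod.snd, s w := by
        rw [sum_product, sum_mul_sum]
    _ ≤ 1 := mul_le_one₀ (ht.2 _ hfst) (sum_nonneg fun w _ => hs.1 w) (hs.2 _ hsnd)

theorem sum_fst_of_strongProd {t : V × W → ℝ} (ht : (G.strongProd H).IsFractionalPacking t)
    {C : Finset V} (hC : G.IsClique (C : Set V)) :
    H.IsFractionalPacking fun w => ∑ v ∈ C, t (v, w) := by
  refine ⟨fun w => sum_nonneg fun v _ => ht.1 _, fun D hD => ?_⟩
  rw [sum_comm, ← sum_product]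
  exact ht.2 _ (by rw [coe_product]; exact hC.strongProd hD)

end IsFractionalPacking

theorem isClosed_setOf_isFractionalPacking (G : SimpleGraph V) :
    IsClosed {t | G.IsFractionalPacking t} := by
  have h : {t | G.IsFractionalPacking t} = (⋂ v, {t : V → ℝ | 0 ≤ t v}) ∩
      ⋂ C : Finset V, ⋂ _ : G.IsClique (C : Set V), {t | ∑ v ∈ C, t v ≤ 1} := by
    ext; simp [IsFractionalPacking]
  rw [h]
  exact (isClosed_iInter fun v => isClosed_le continuous_const (continuous_apply v)).inter
    (isClosed_iInter fun C => isClosed_iInter fun _ =>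
      isClosed_le (continuous_finsetSum _ fun v _ => continuous_apply v) continuous_const)

theorem isCompact_setOf_isFractionalPacking [Finite V] (G : SimpleGraph V) :
    IsCompact {t | G.IsFractionalPacking t} :=
  isCompact_Icc.of_isClosed_subset G.isClosed_setOf_isFractionalPacking
    fun _ ht => ⟨ht.1, ht.le_one⟩

variable [Fintype V] [Fintype W]

theorem alphaStar_eq_sSup_image (G : SimpleGraph V) :
    G.alphaStar = sSup ((fun t => ∑ v, t v) '' {t | G.IsFractionalPacking t}) := by
  simp only [alphaStar, IsFractionalPacking, Set.image, Set.mem_ofPred_eq, and_assoc, eq_comm]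

theorem IsFractionalPacking.sum_le_alphaStar {t : V → ℝ} (ht : G.IsFractionalPacking t) :
    ∑ v, t v ≤ G.alphaStar := by
  rw [alphaStar_eq_sSup_image]
  exact le_csSup ((G.isCompact_setOf_isFractionalPacking.image (by fun_prop)).bddAbove)
    ⟨t, ht, rfl⟩

theorem exists_isFractionalPacking_sum_eq_alphaStar (G : SimpleGraph V) :
    ∃ t, G.IsFractionalPacking t ∧ ∑ v, t v = G.alphaStar := by
  rw [alphaStar_eq_sSup_image]
  refine (G.isCompact_setOf_isFractionalPacking.image (by fun_prop)).sSup_mem ⟨_, 0, ?_, rfl⟩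
  exact ⟨fun _ => le_rfl, fun C _ => by simp⟩

/-- Rescale `r` by `c`; the case `c = 0` forces `r = 0` through the singleton cliques. -/
theorem sum_le_mul_alphaStar {r : V → ℝ} {c : ℝ} (hr : ∀ v, 0 ≤ r v)
    (hC : ∀ C : Finset V, G.IsClique (C : Set V) → ∑ v ∈ C, r v ≤ c) :
    ∑ v, r v ≤ c * G.alphaStar := by
  rcases (show 0 ≤ c by simpa using hC ∅ (by simp)).eq_or_lt with rfl | hc
  · calc ∑ v, r v ≤ ∑ _v : V, (0 : ℝ) := sum_le_sum fun v _ => by simpa using hC {v} (by simp)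
      _ = 0 * G.alphaStar := by simp
  · have hpack : G.IsFractionalPacking fun v => r v / c :=
      ⟨fun v => div_nonneg (hr v) hc.le,
        fun C hC' => by rw [← sum_div, div_le_one hc]; exact hC C hC'⟩
    have := hpack.sum_le_alphaStar
    rwa [← sum_div, div_le_iff₀' hc] at this

theorem alphaStar_strongProd_le (G : SimpleGraph V) (H : SimpleGraph W) :
    (G.strongProd H).alphaStar ≤ G.alphaStar * H.alphaStar := by
  obtain ⟨t, ht, hsum⟩ := (G.strongProd H).exists_isFractionalPacking_sum_eq_alphaStar
  have hclique (C : Finset V) (hC : G.IsClique (C : Set V)) :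
      ∑ v ∈ C, ∑ w, t (v, w) ≤ H.alphaStar := by
    rw [sum_comm]; exact (ht.sum_fst_of_strongProd hC).sum_le_alphaStar
  rw [← hsum, Fintype.sum_prod_type, mul_comm]
  exact sum_le_mul_alphaStar (fun v => sum_nonneg fun w _ => ht.1 _) hclique

theorem le_alphaStar_strongProd (G : SimpleGraph V) (H : SimpleGraph W) :
    G.alphaStar * H.alphaStar ≤ (G.strongProd H).alphaStar := by
  obtain ⟨t, ht, hGt⟩ := G.exists_isFractionalPacking_sum_eq_alphaStar
  obtain ⟨s, hs, hHs⟩ := H.exists_isFractionalPacking_sum_eq_alphaStar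
  rw [← hGt, ← hHs, sum_mul_sum, ← Fintype.sum_prod_type']
  exact (ht.mul hs).sum_le_alphaStar

end SimpleGraph

theorem alphaStar_strongProd {V W : Type*} [Fintype V] [Fintype W]
    (G : SimpleGraph V) (H : SimpleGraph W) :
    (G.strongProd H).alphaStar = G.alphaStar * H.alphaStar :=
  (alphaStar_strongProd_le G H).antisymm (le_alphaStar_strongProd G H)
end

section
/- If B is an optimal solution to the SDP defining ϑ⁺(G) (maximize tr(BJ) over PSD B with tr B = 1 and B_{vw} ≤ 0 for edges vw), then every nonzero row of B has strictly positive row sum. -/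
/-!
Pinching `B` along a vertex set `s`, i.e. erasing the entries between `s` and its complement,
gives `P B P + Q B Q` for the complementary coordinate projections `P` and `Q`. It is therefore
again positive semidefinite, has the same diagonal, and only turns entries into `0`, so it is
feasible. Optimality of `B` forces the erased entries to have nonnegative total. For `s = {v}`
this says that the row sum at `v` is at least `B v v`, which is positive as soon as the row is
nonzero, since the `2 × 2` principal minors of `B` are nonnegative.
-/

open Finset

open SimpleGraph
open scoped RealInnerProductSpace

namespace Matrix

lemma PosSemidef.sq_apply_le {n : Type*} {A : Matrix n n ℝ} (hA : A.PosSemidef)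
    (i j : n) : A i j ^ 2 ≤ A i i * A j j := by
  have hminor := (hA.submatrix ![i, j]).det_nonneg
  have hji : A j i = A i j := by simpa using hA.isHermitian.apply i j
  rw [det_fin_two] at hminor
  simp only [submatrix_apply, cons_val_zero, cons_val_one, hji] at hminor
  nlinarith

lemma PosSemidef.diag_pos_of_apply_ne_zero {n : Type*} {A : Matrix n n ℝ}
    (hA : A.PosSemidef) {i j : n} (hij : A i j ≠ 0) : 0 < A i i := by
  refine hA.diag_nonneg.lt_of_ne fun hii => hij ?_
  have hsq := hA.sq_apply_le i j
  rw [← hii, zero_mul] at hsq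
  exact pow_eq_zero_iff two_ne_zero |>.mp (le_antisymm hsq (sq_nonneg _))

variable {n R : Type*} [DecidableEq n]

def pinch [Zero R] (s : Finset n) (A : Matrix n n R) : Matrix n n R :=
  of fun i j => if (i ∈ s ↔ j ∈ s) then A i j else 0

@[simp]
lemma pinch_apply [Zero R] (s : Finset n) (A : Matrix n n R) (i j : n) :
    A.pinch s i j = if (i ∈ s ↔ j ∈ s) then A i j else 0 := rfl

variable [Fintype n]

lemma pinch_eq_add [Ring R] [StarRing R] (s : Finset n) (A : Matrix n n R) :
    A.pinch s =
      diagonal (fun i => if i ∈ s then 1 else 0) * A *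
          (diagonal (fun i => if i ∈ s then 1 else 0))ᴴ +
        diagonal (fun i => if i ∈ s then 0 else 1) * A *
          (diagonal (fun i => if i ∈ s then 0 else 1))ᴴ := by
  ext i j
  by_cases hi : i ∈ s <;> by_cases hj : j ∈ s <;> simp [diagonal_conjTranspose, hi, hj]

lemma PosSemidef.pinch [Ring R] [PartialOrder R] [StarRing R] [AddLeftMono R]
    {A : Matrix n n R} (hA : A.PosSemidef) (s : Finset n) : (A.pinch s).PosSemidef := by
  rw [pinch_eq_add]
  exact (hA.mul_mul_conjTranspose_same _).add (hA.mul_mul_conjTranspose_same _)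

@[simp]
lemma trace_pinch [AddCommMonoid R] (s : Finset n) (A : Matrix n n R) :
    (A.pinch s).trace = A.trace := by
  simp [trace]

lemma sum_pinch_add_sum_cut [AddCommMonoid R] (s : Finset n) (A : Matrix n n R) :
    ∑ i, ∑ j, A.pinch s i j + ∑ i ∈ s, ∑ j ∈ sᶜ, (A i j + A j i) = ∑ i, ∑ j, A i j := by
  have hsplit : ∀ f : n → n → R, ∑ i, ∑ j, f i j
      = ∑ i ∈ s, ∑ j ∈ s, f i j + ∑ i ∈ s, ∑ j ∈ sᶜ, f i j
        + (∑ i ∈ sᶜ, ∑ j ∈ s, f i j + ∑ i ∈ sᶜ, ∑ j ∈ sᶜ, f i j) := fun f => by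
    simp only [← sum_add_distrib, sum_add_sum_compl]
  have hblock : ∀ t u : Finset n, (∀ i ∈ t, ∀ j ∈ u, (i ∈ s ↔ j ∈ s)) →
      ∑ i ∈ t, ∑ j ∈ u, A.pinch s i j = ∑ i ∈ t, ∑ j ∈ u, A i j := fun t u h =>
    sum_congr rfl fun i hi => sum_congr rfl fun j hj => if_pos (h i hi j hj)
  have hoff : ∀ t u : Finset n, (∀ i ∈ t, ∀ j ∈ u, ¬(i ∈ s ↔ j ∈ s)) →
      ∑ i ∈ t, ∑ j ∈ u, A.pinch s i j = 0 := fun t u h =>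
    sum_eq_zero fun i hi => sum_eq_zero fun j hj => if_neg (h i hi j hj)
  rw [hsplit (A.pinch s), hsplit A, sum_comm (s := sᶜ) (t := s) (f := fun i j => A i j),
    hblock s s (by simp +contextual), hblock sᶜ sᶜ (by simp +contextual),
    hoff s sᶜ (by simp +contextual), hoff sᶜ s (by simp +contextual)]
  simp only [sum_add_distrib]
  abel

end Matrix

lemma cut_nonneg_of_optimal {V : Type*} [Fintype V] [DecidableEq V] (G : SimpleGraph V)
    (B : Matrix V V ℝ) (hB : B.PosSemidef) (htr : B.trace = 1)
    (hedge : ∀ v w, G.Adj v w → B v w ≤ 0)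
    (hopt : ∀ B' : Matrix V V ℝ, B'.PosSemidef → B'.trace = 1 →
        (∀ v w, G.Adj v w → B' v w ≤ 0) → ∑ v, ∑ w, B' v w ≤ ∑ v, ∑ w, B v w)
    (s : Finset V) : 0 ≤ ∑ i ∈ s, ∑ j ∈ sᶜ, (B i j + B j i) := by
  have hfeas : ∀ v w, G.Adj v w → B.pinch s v w ≤ 0 := fun v w hvw => by
    rw [Matrix.pinch_apply]
    split_ifs
    exacts [hedge v w hvw, le_rfl]
  have hle := hopt _ (hB.pinch s) (by rw [Matrix.trace_pinch, htr]) hfeas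
  linarith [Matrix.sum_pinch_add_sum_cut s B]

theorem optimal_thetaPlus_rowsum_pos {V : Type*} [Fintype V] (G : SimpleGraph V)
    (B : Matrix V V ℝ) (hB : B.PosSemidef) (htr : B.trace = 1)
    (hedge : ∀ v w, G.Adj v w → B v w ≤ 0)
    (hopt : ∀ B' : Matrix V V ℝ, B'.PosSemidef → B'.trace = 1 →
        (∀ v w, G.Adj v w → B' v w ≤ 0) → ∑ v, ∑ w, B' v w ≤ ∑ v, ∑ w, B v w) :
    ∀ v, (∃ w, B v w ≠ 0) → 0 < ∑ w, B v w := by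
  classical
  rintro v ⟨w, hvw⟩
  have hcut := cut_nonneg_of_optimal G B hB htr hedge hopt {v}
  have hsymm : ∀ j, B j v = B v j := fun j => by simpa using hB.isHermitian.apply v j
  simp only [sum_singleton, hsymm, sum_add_distrib] at hcut
  calc 0 < B v v + ∑ j ∈ {v}ᶜ, B v j := by linarith [hB.diag_pos_of_apply_ne_zero hvw]
    _ = ∑ w, B v w := by rw [← sum_singleton (fun j => B v j) v, sum_add_sum_compl]
end
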